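/- Let n ≥ 1 and let V : ℝⁿ → ℝ be continuous and ℤⁿ-periodic with max_{ℝⁿ} V = 0, and suppose that the set of maximizers per period, {x ∈ [0,1)ⁿ : V(x) = 0}, is finite. Then H̄(p) ≥ 0 for every p ∈ ℝⁿ, and there exists r > 0 such that H̄(p) = 0 whenever |p| ≤ r; that is, 0 is an interior point of the minimal level set F₀ = {p ∈ ℝⁿ : H̄(p) = 0}. -/

import Mathlib

/-!
`H̄ ≥ 0` because every competing maximum is at least its value `½|p + Dφ(x₀)|² ≥ 0` at a zero
`x₀` of `V`.

For the ball, let `S` be the finitely many zeros of `V` in the unit cell. Periodizing a cut-off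
of the identity map around each point of `S` gives a `ℤⁿ`-periodic C¹ vector field `W` with
`DW = I` near `S + ℤⁿ` and `DW` bounded. With `φ = -⟪p, W⟫` we get `p + ∇φ = (I - DW)ᵀ p`, which
vanishes near the zeros of `V`; away from them `V ≤ -δ` by compactness and periodicity, while
`|p + ∇φ| ≤ (1 + sup ‖DW‖) |p|`. Hence `½|p + ∇φ|² + V ≤ 0` everywhere once `|p|` is small,
so `H̄(p) ≤ 0`.
-/

noncomputable section

open MeasureTheory Filter Topology Real
open scoped RealInnerProductSpace

/-- The point of `EuclideanSpace ℝ (Fin n)` with integer coordinates `k`. -/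
def ivN (n : ℕ) (k : Fin n → ℤ) : EuclideanSpace ℝ (Fin n) := WithLp.toLp 2 (fun i => (k i : ℝ))

/-- `ℤⁿ`-periodicity of a function on `ℝⁿ`. -/
def ZPerN (n : ℕ) (f : EuclideanSpace ℝ (Fin n) → ℝ) : Prop :=
  ∀ (x : EuclideanSpace ℝ (Fin n)) (k : Fin n → ℤ), f (x + ivN n k) = f x

/-- The effective Hamiltonian via the inf–max formula. -/
def effHN (n : ℕ) (V : EuclideanSpace ℝ (Fin n) → ℝ) (p : EuclideanSpace ℝ (Fin n)) : ℝ :=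
  sInf {A : ℝ | ∃ φ : EuclideanSpace ℝ (Fin n) → ℝ, ContDiff ℝ 1 φ ∧ ZPerN n φ ∧
    A = ⨆ x : EuclideanSpace ℝ (Fin n), ((1 / 2) * ‖p + gradient φ x‖ ^ 2 + V x)}

open Function Metric

lemma iSup_nonneg_of_apply_nonneg {ι : Type*} {f : ι → ℝ} (i : ι) (hi : 0 ≤ f i) :
    0 ≤ ⨆ j, f j := by
  by_cases hbdd : BddAbove (Set.range f)
  · exact hi.trans (le_ciSup hbdd i)
  · rw [Real.iSup_of_not_bddAbove hbdd]

lemma exists_contDiff_fderiv_eq_id_near_zero {F : Type*} [NormedAddCommGroup F]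
    [NormedSpace ℝ F] [FiniteDimensional ℝ F] {a b : ℝ} (ha : 0 < a) (hab : a < b) :
    ∃ B : F → F, ContDiff ℝ 1 B ∧ support B ⊆ ball 0 b ∧ (∃ M, ∀ z, ‖fderiv ℝ B z‖ ≤ M) ∧
      ∀ z, ‖z‖ < a → fderiv ℝ B z = ContinuousLinearMap.id ℝ F := by
  let c : ContDiffBump (0 : F) := ⟨a, b, ha, hab⟩
  have hB : ContDiff ℝ 1 fun z => c z • z := c.contDiff.smul contDiff_id
  have hsupp : support (fun z => c z • z) ⊆ ball 0 b := by
    simpa [c.support_eq] using support_smul_subset_left (⇑c) id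
  refine ⟨fun z => c z • z, hB, hsupp, ?_, fun z hz => ?_⟩
  · have hcs : HasCompactSupport fun z => c z • z := c.hasCompactSupport.smul_right
    exact (hB.continuous_fderiv one_ne_zero).bounded_above_of_compact_support (hcs.fderiv ℝ)
  · have hid : (fun z => c z • z) =ᶠ[𝓝 z] id := by
      filter_upwards [isOpen_ball.mem_nhds (mem_ball_zero_iff.2 hz)] with w hw
      simp [c.one_of_mem_closedBall (ball_subset_closedBall hw)]
    rw [hid.fderiv_eq, fderiv_id]

lemma norm_add_gradient_neg_inner_le {F : Type*} [NormedAddCommGroup F] [InnerProductSpace ℝ F]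
    [CompleteSpace F] (p : F) {W : F → F} {x : F} (hW : DifferentiableAt ℝ W x) :
    ‖p + gradient (fun y => -⟪p, W y⟫) x‖ ≤
      ‖p‖ * ‖ContinuousLinearMap.id ℝ F - fderiv ℝ W x‖ := by
  have hφ : HasFDerivAt (fun y => -⟪p, W y⟫) (-(innerSL ℝ p).comp (fderiv ℝ W x)) x :=
    ((innerSL ℝ p).hasFDerivAt.comp x hW.hasFDerivAt).neg
  calc ‖p + gradient (fun y => -⟪p, W y⟫) x‖
      = ‖InnerProductSpace.toDual ℝ F (p + gradient (fun y => -⟪p, W y⟫) x)‖ :=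
        (LinearIsometryEquiv.norm_map _ _).symm
    _ = ‖(innerSL ℝ p).comp (ContinuousLinearMap.id ℝ F - fderiv ℝ W x)‖ := by
        congr 1
        ext v
        simp [gradient, hφ.fderiv, sub_eq_add_neg]
    _ ≤ ‖innerSL ℝ p‖ * ‖ContinuousLinearMap.id ℝ F - fderiv ℝ W x‖ :=
        ContinuousLinearMap.opNorm_comp_le _ _
    _ = ‖p‖ * ‖ContinuousLinearMap.id ℝ F - fderiv ℝ W x‖ := by rw [innerSL_apply_norm]

lemma half_le_abs_sub_of_round_ne {t : ℝ} {m : ℤ} (h : round t ≠ m) : 1 / 2 ≤ |t - m| := by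
  by_contra! hlt
  rw [abs_lt] at hlt
  exact h (round_eq_iff.2 ⟨by linarith, by linarith⟩)

lemma EuclideanSpace.norm_le_norm_of_forall_abs_le {ι : Type*} [Fintype ι]
    {x y : EuclideanSpace ℝ ι} (h : ∀ i, |x i| ≤ |y i|) : ‖x‖ ≤ ‖y‖ := by
  simp only [EuclideanSpace.norm_eq, Real.norm_eq_abs]
  exact Real.sqrt_le_sqrt <| Finset.sum_le_sum fun i _ => pow_le_pow_left₀ (abs_nonneg _) (h i) 2

section Lattice

variable {n : ℕ}

local notation "E" => EuclideanSpace ℝ (Fin n)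

@[simp]
lemma ivN_apply (k : Fin n → ℤ) (i : Fin n) : ivN n k i = k i := rfl

@[simp]
lemma ivN_zero : ivN n 0 = 0 := by
  ext i; simp

lemma ivN_add (k k' : Fin n → ℤ) : ivN n (k + k') = ivN n k + ivN n k' := by
  ext i; simp

lemma ivN_neg (k : Fin n → ℤ) : ivN n (-k) = -ivN n k := by
  ext i; simp

/-- `y` minus a nearest point of `ℤⁿ`. -/
def latticeRem (n : ℕ) (y : EuclideanSpace ℝ (Fin n)) : EuclideanSpace ℝ (Fin n) :=
  y - ivN n fun i => round (y i)

lemma latticeRem_apply (y : E) (i : Fin n) : latticeRem n y i = y i - round (y i) := by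
  simp [latticeRem]

lemma latticeRem_add_ivN (y : E) (k : Fin n → ℤ) : latticeRem n (y + ivN n k) = latticeRem n y := by
  ext i
  simp only [latticeRem_apply, PiLp.add_apply, ivN_apply, round_add_intCast, Int.cast_add]
  ring

lemma latticeRem_ivN (k : Fin n → ℤ) : latticeRem n (ivN n k) = 0 := by
  simp [latticeRem]

lemma norm_latticeRem_le (y : E) (k : Fin n → ℤ) : ‖latticeRem n y‖ ≤ ‖y - ivN n k‖ :=
  EuclideanSpace.norm_le_norm_of_forall_abs_le fun i => by
    simpa [latticeRem_apply] using round_le (y i) (k i)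

lemma norm_latticeRem_le_norm (y : E) : ‖latticeRem n y‖ ≤ ‖y‖ := by
  simpa using norm_latticeRem_le y 0

lemma norm_latticeRem_neg (y : E) : ‖latticeRem n (-y)‖ = ‖latticeRem n y‖ := by
  have key : ∀ z : E, ‖latticeRem n (-z)‖ ≤ ‖latticeRem n z‖ := fun z =>
    (norm_latticeRem_le _ (-fun i => round (z i))).trans_eq <| by
      rw [ivN_neg, latticeRem, ← norm_neg]; congr 1; abel
  exact le_antisymm (key y) (by simpa using key (-y))

lemma norm_latticeRem_add_le (y z : E) :
    ‖latticeRem n (y + z)‖ ≤ ‖latticeRem n y‖ + ‖latticeRem n z‖ :=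
  calc ‖latticeRem n (y + z)‖
      ≤ ‖y + z - ivN n ((fun i => round (y i)) + fun i => round (z i))‖ :=
        norm_latticeRem_le _ _
    _ = ‖latticeRem n y + latticeRem n z‖ := by
        rw [ivN_add, latticeRem, latticeRem, add_sub_add_comm]
    _ ≤ _ := norm_add_le _ _

lemma lipschitzWith_norm_latticeRem : LipschitzWith 1 fun y : E => ‖latticeRem n y‖ :=
  LipschitzWith.of_le_add fun y z => by
    calc ‖latticeRem n y‖ = ‖latticeRem n (z + (y - z))‖ := by rw [add_sub_cancel]
      _ ≤ ‖latticeRem n z‖ + ‖y - z‖ :=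
        (norm_latticeRem_add_le _ _).trans (add_le_add_right (norm_latticeRem_le_norm _) _)
      _ = ‖latticeRem n z‖ + dist y z := by rw [dist_eq_norm]

lemma exists_add_ivN_mem_Ico (x : E) : ∃ k : Fin n → ℤ, ∀ i, (x + ivN n k) i ∈ Set.Ico (0 : ℝ) 1 :=
  ⟨fun i => -⌊x i⌋, fun i => by
    simpa [← sub_eq_add_neg] using Int.fract_lt_one (x i)⟩

lemma eq_of_latticeRem_sub_eq_zero {s s' : E} (hs : ∀ i, s i ∈ Set.Ico (0 : ℝ) 1)
    (hs' : ∀ i, s' i ∈ Set.Ico (0 : ℝ) 1) (h : latticeRem n (s - s') = 0) : s = s' := by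
  ext i
  have hi : s i - s' i = round (s i - s' i) := by
    simpa [latticeRem_apply, sub_eq_zero] using congrArg (· i) h
  have hlt : |((round (s i - s' i) : ℤ) : ℝ)| < 1 := by
    rw [← hi, abs_lt]
    constructor <;> linarith [(hs i).1, (hs i).2, (hs' i).1, (hs' i).2]
  have h0 : round (s i - s' i) = 0 := Int.abs_lt_one_iff.1 (by exact_mod_cast hlt)
  rw [h0, Int.cast_zero, sub_eq_zero] at hi
  exact hi

lemma apply_eq_zero_of_le_abs {F : Type*} [Zero F] {f : E → F} {r : ℝ}
    (hf : support f ⊆ ball 0 r) {z : E} {i : Fin n} (hz : r ≤ |z i|) : f z = 0 :=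
  notMem_support.1 fun h => by
    have := (PiLp.norm_apply_le z i).trans_lt (mem_ball_zero_iff.1 (hf h))
    rw [Real.norm_eq_abs] at this
    linarith

/-- Where rounding and `k` disagree in some coordinate, both arguments lie outside the support
of `f`. -/
lemma comp_latticeRem_eq {F : Type*} [Zero F] {f : E → F} {r : ℝ} (hr : r ≤ 1 / 2)
    (hf : support f ⊆ ball 0 r) {y : E} {k : Fin n → ℤ} (hyk : ∀ i, |y i - k i| ≤ 1 - r) :
    f (latticeRem n y) = f (y - ivN n k) := by
  by_cases hround : ∀ i, round (y i) = k i
  · simp only [latticeRem, hround]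
  push Not at hround
  obtain ⟨i, hi⟩ := hround
  have hk : r ≤ |(y - ivN n k) i| := by
    simpa using hr.trans (half_le_abs_sub_of_round_ne hi)
  have hround : r ≤ |latticeRem n y i| := by
    have h1 : (1 : ℝ) ≤ |(k i : ℝ) - round (y i)| := by
      exact_mod_cast Int.one_le_abs (sub_ne_zero.2 hi.symm)
    have h2 := abs_sub_le (k i : ℝ) (y i) (round (y i))
    rw [abs_sub_comm (k i : ℝ) (y i)] at h2
    rw [latticeRem_apply]
    linarith [hyk i]
  rw [apply_eq_zero_of_le_abs hf hk, apply_eq_zero_of_le_abs hf hround]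

lemma comp_latticeRem_eventuallyEq {F : Type*} [Zero F] {f : E → F} {r : ℝ} (hr : r < 1 / 2)
    (hf : support f ⊆ ball 0 r) (x : E) :
    (fun y => f (latticeRem n y)) =ᶠ[𝓝 x] fun y => f (y - ivN n fun i => round (x i)) := by
  have hnear : ∀ᶠ y in 𝓝 x, ∀ i, |y i - ((round (x i) : ℤ) : ℝ)| < 1 - r :=
    eventually_all.2 fun i => ContinuousAt.eventually_lt (by fun_prop) continuousAt_const
      (by linarith [abs_sub_round (x i)])
  filter_upwards [hnear] with y hy
  exact comp_latticeRem_eq hr.le hf fun i => (hy i).le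

lemma contDiff_comp_latticeRem {F : Type*} [NormedAddCommGroup F] [NormedSpace ℝ F]
    {f : E → F} {r : ℝ} {k : WithTop ℕ∞} (hf : ContDiff ℝ k f) (hr : r < 1 / 2)
    (hsupp : support f ⊆ ball 0 r) : ContDiff ℝ k fun y => f (latticeRem n y) :=
  contDiff_iff_contDiffAt.2 fun x =>
    (hf.comp (contDiff_id.sub contDiff_const)).contDiffAt.congr_of_eventuallyEq
      (comp_latticeRem_eventuallyEq hr hsupp x)

lemma hasFDerivAt_comp_latticeRem {F : Type*} [NormedAddCommGroup F] [NormedSpace ℝ F]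
    {f : E → F} {r : ℝ} (hf : Differentiable ℝ f) (hr : r < 1 / 2)
    (hsupp : support f ⊆ ball 0 r) (x : E) :
    HasFDerivAt (fun y => f (latticeRem n y)) (fderiv ℝ f (latticeRem n x)) x := by
  have htransl : HasFDerivAt (fun y => f (y - ivN n fun i => round (x i)))
      ((fderiv ℝ f (latticeRem n x)).comp (ContinuousLinearMap.id ℝ E)) x :=
    HasFDerivAt.comp x (hf := hasFDerivAt_sub_const _) (hf _).hasFDerivAt
  rw [ContinuousLinearMap.comp_id] at htransl
  exact htransl.congr_of_eventuallyEq (comp_latticeRem_eventuallyEq hr hsupp x)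

lemma isCompact_unitCube : IsCompact {y : E | ∀ i, y i ∈ Set.Icc (0 : ℝ) 1} := by
  convert (EuclideanSpace.equiv (Fin n) ℝ).toHomeomorph.isCompact_preimage.2
    (isCompact_univ_pi fun _ => isCompact_Icc (a := (0 : ℝ)) (b := 1)) using 1
  ext y
  simp [Pi.le_def, forall_and]

lemma exists_pos_le_neg_of_periodic {V : E → ℝ} (hV : Continuous V) (hper : ZPerN n V)
    {K : Set E} (hK : IsClosed K) (hKper : ∀ x ∈ K, ∀ k, x + ivN n k ∈ K)
    (hneg : ∀ x ∈ K, V x < 0) : ∃ δ > 0, ∀ x ∈ K, V x ≤ -δ := by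
  set C := K ∩ {y : E | ∀ i, y i ∈ Set.Icc (0 : ℝ) 1}
  have hrep : ∀ x ∈ K, ∃ y ∈ C, V y = V x := fun x hx => by
    obtain ⟨k, hk⟩ := exists_add_ivN_mem_Ico x
    exact ⟨x + ivN n k, ⟨hKper x hx k, fun i => Set.Ico_subset_Icc_self (hk i)⟩, hper x k⟩
  rcases C.eq_empty_or_nonempty with hC | hC
  · refine ⟨1, one_pos, fun x hx => ?_⟩
    obtain ⟨y, hy, -⟩ := hrep x hx
    simp [hC] at hy
  · obtain ⟨y₀, hy₀, hmax⟩ :=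
      (isCompact_unitCube.inter_left hK).exists_isMaxOn hC hV.continuousOn
    refine ⟨-V y₀, by linarith [hneg y₀ hy₀.1], fun x hx => ?_⟩
    obtain ⟨y, hy, hVy⟩ := hrep x hx
    linarith [isMaxOn_iff.1 hmax y hy]

lemma exists_pos_le_norm_latticeRem_sub (S : Finset E)
    (hS : ∀ s ∈ S, ∀ s' ∈ S, latticeRem n (s - s') = 0 → s = s') :
    ∃ ε > 0, ∀ s ∈ S, ∀ s' ∈ S, s ≠ s' → ε ≤ ‖latticeRem n (s - s')‖ := by
  have hev : ∀ᶠ ε in 𝓝 (0 : ℝ), ∀ q ∈ S.offDiag, ε ≤ ‖latticeRem n (q.1 - q.2)‖ :=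
    (Finset.eventually_all _).2 fun q hq => by
      obtain ⟨hq₁, hq₂, hne⟩ := Finset.mem_offDiag.1 hq
      exact eventually_le_nhds (norm_pos_iff.2 fun h => hne (hS _ hq₁ _ hq₂ h))
  obtain ⟨ε, hsep, hε⟩ :=
    ((hev.filter_mono nhdsWithin_le_nhds).and (self_mem_nhdsWithin (s := Set.Ioi 0))).exists
  exact ⟨ε, hε, fun s hs s' hs' hne => hsep (s, s') (Finset.mem_offDiag.2 ⟨hs, hs', hne⟩)⟩

theorem exists_periodic_fderiv_eq_id (S : Finset E)
    (hS : ∀ s ∈ S, ∀ s' ∈ S, latticeRem n (s - s') = 0 → s = s') :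
    ∃ ρ > 0, ∃ W : E → E, ContDiff ℝ 1 W ∧ (∀ y k, W (y + ivN n k) = W y) ∧
      (∃ M, ∀ x, ‖fderiv ℝ W x‖ ≤ M) ∧
      ∀ x, ∀ s ∈ S, ‖latticeRem n (x - s)‖ < ρ → fderiv ℝ W x = ContinuousLinearMap.id ℝ E := by
  obtain ⟨ε, hε, hsep⟩ := exists_pos_le_norm_latticeRem_sub S hS
  -- `2ρ < 1/2` makes `B ∘ latticeRem` smooth; `4ρ ≤ ε` keeps the bumps around distinct points
  -- of `S` away from each other's `ρ`-neighbourhoods.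
  set ρ := min (ε / 4) (1 / 8)
  have hρ : 0 < ρ := by positivity
  have hρε : 4 * ρ ≤ ε := by linarith [min_le_left (ε / 4) (1 / 8)]
  have hr : 2 * ρ < 1 / 2 := by linarith [min_le_right (ε / 4) (1 / 8)]
  obtain ⟨B, hB, hBsupp, ⟨M, hM⟩, hBid⟩ :=
    exists_contDiff_fderiv_eq_id_near_zero (F := E) hρ (by linarith : ρ < 2 * ρ)
  have hderiv : ∀ x, HasFDerivAt (fun y => ∑ s ∈ S, B (latticeRem n (y - s)))
      (∑ s ∈ S, fderiv ℝ B (latticeRem n (x - s))) x := fun x =>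
    HasFDerivAt.fun_sum fun s _ => by
      have := (hasFDerivAt_comp_latticeRem (hB.differentiable one_ne_zero) hr hBsupp
        (x - s)).comp x (hasFDerivAt_sub_const s)
      rwa [ContinuousLinearMap.comp_id] at this
  refine ⟨ρ, hρ, fun y => ∑ s ∈ S, B (latticeRem n (y - s)),
    ContDiff.sum fun s _ => (contDiff_comp_latticeRem hB hr hBsupp).comp
      (contDiff_id.sub contDiff_const),
    fun y k => Finset.sum_congr rfl fun s _ => by rw [add_sub_right_comm, latticeRem_add_ivN],
    ⟨S.card * M, fun x => ?_⟩, fun x s₁ hs₁ hx => ?_⟩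
  · rw [(hderiv x).fderiv]
    exact (norm_sum_le_of_le S fun s _ => hM _).trans_eq (by simp)
  rw [(hderiv x).fderiv, Finset.sum_eq_single s₁ (fun s hs hne => ?_) (absurd hs₁), hBid _ hx]
  refine fderiv_of_notMem_tsupport ℝ fun hmem => ?_
  have hnear : ‖latticeRem n (x - s)‖ ≤ 2 * ρ := mem_closedBall_zero_iff.1
    ((closure_mono hBsupp).trans closure_ball_subset_closedBall hmem)
  have hfar : 3 * ρ < ‖latticeRem n (x - s)‖ + ρ :=
    calc 3 * ρ < ‖latticeRem n (s₁ - s)‖ := by linarith [hsep s₁ hs₁ s hs (Ne.symm hne)]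
      _ = ‖latticeRem n ((x - s) + -(x - s₁))‖ := by congr 2; abel
      _ ≤ ‖latticeRem n (x - s)‖ + ‖latticeRem n (x - s₁)‖ := by
        simpa only [norm_latticeRem_neg] using norm_latticeRem_add_le (x - s) (-(x - s₁))
      _ < ‖latticeRem n (x - s)‖ + ρ := by gcongr
  linarith

lemma effHN_nonneg {V : E → ℝ} {x₀ : E} (hx₀ : 0 ≤ V x₀) (p : E) : 0 ≤ effHN n V p :=
  Real.sInf_nonneg fun _ ⟨_, _, _, hA⟩ => hA ▸ iSup_nonneg_of_apply_nonneg x₀ (by positivity)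

lemma effHN_le_iSup {V : E → ℝ} {x₀ : E} (hx₀ : 0 ≤ V x₀) (p : E) {φ : E → ℝ}
    (hφ : ContDiff ℝ 1 φ) (hφper : ZPerN n φ) :
    effHN n V p ≤ ⨆ x, (1 / 2 * ‖p + gradient φ x‖ ^ 2 + V x) :=
  csInf_le ⟨0, fun _ ⟨_, _, _, hA⟩ => hA ▸ iSup_nonneg_of_apply_nonneg x₀ (by positivity)⟩
    ⟨φ, hφ, hφper, rfl⟩

lemma exists_latticeRem_sub_eq_zero {V : E → ℝ} (hper : ZPerN n V) {x : E} (hx : V x = 0) :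
    ∃ s, ((∀ i, s i ∈ Set.Ico (0 : ℝ) 1) ∧ V s = 0) ∧ latticeRem n (x - s) = 0 := by
  obtain ⟨k, hk⟩ := exists_add_ivN_mem_Ico x
  refine ⟨x + ivN n k, ⟨hk, (hper x k).trans hx⟩, ?_⟩
  rw [sub_add_cancel_left, ← ivN_neg, latticeRem_ivN]

lemma exists_pos_le_neg_away_from_zeros {V : E → ℝ} (hV : Continuous V) (hper : ZPerN n V)
    (hmax : ∀ x, V x ≤ 0) {S : Finset E} (hS : ∀ x, V x = 0 → ∃ s ∈ S, latticeRem n (x - s) = 0)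
    {ρ : ℝ} (hρ : 0 < ρ) :
    ∃ δ > 0, ∀ x, (∀ s ∈ S, ρ ≤ ‖latticeRem n (x - s)‖) → V x ≤ -δ := by
  refine exists_pos_le_neg_of_periodic hV hper (K := {x | ∀ s ∈ S, ρ ≤ ‖latticeRem n (x - s)‖})
    ?_ (fun x hx k s hs => ?_) fun x hx => (hmax x).lt_of_ne fun h0 => ?_
  · simp only [Set.ofPred_forall]
    exact isClosed_biInter fun s _ => isClosed_le continuous_const
      (lipschitzWith_norm_latticeRem.continuous.comp (continuous_sub_right s))
  · rw [add_sub_right_comm, latticeRem_add_ivN]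
    exact hx s hs
  · obtain ⟨s, hs, hxs⟩ := hS x h0
    have := hx s hs
    rw [hxs, norm_zero] at this
    linarith

lemma effHN_eq_zero_of_periodic_field {V : E → ℝ} {x₀ : E} (hx₀ : V x₀ = 0)
    (hmax : ∀ x, V x ≤ 0) {W : E → E} (hW : ContDiff ℝ 1 W)
    (hWper : ∀ y k, W (y + ivN n k) = W y) {M δ : ℝ} (hM : ∀ x, ‖fderiv ℝ W x‖ ≤ M)
    (hδ : ∀ x, fderiv ℝ W x ≠ ContinuousLinearMap.id ℝ E → V x ≤ -δ) {p : E}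
    (hp : (‖p‖ * (1 + M)) ^ 2 ≤ 2 * δ) : effHN n V p = 0 := by
  refine le_antisymm ?_ (effHN_nonneg hx₀.ge p)
  refine (effHN_le_iSup hx₀.ge p (φ := fun y => -⟪p, W y⟫) (contDiff_const.inner ℝ hW).neg
    fun y k => by simp only [hWper]).trans (ciSup_le fun x => ?_)
  have hgrad := norm_add_gradient_neg_inner_le p ((hW.differentiable one_ne_zero) x)
  by_cases hDW : fderiv ℝ W x = ContinuousLinearMap.id ℝ E
  · rw [hDW, sub_self, norm_zero, mul_zero, norm_le_zero_iff] at hgrad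
    simpa [hgrad] using hmax x
  · have hsmall : ‖p + gradient (fun y => -⟪p, W y⟫) x‖ ≤ ‖p‖ * (1 + M) :=
      hgrad.trans <| mul_le_mul_of_nonneg_left
        ((norm_sub_le _ _).trans (add_le_add ContinuousLinearMap.norm_id_le (hM x))) (norm_nonneg p)
    nlinarith [pow_le_pow_left₀ (norm_nonneg _) hsmall 2, hδ x hDW]

end Lattice

theorem statement_15_general (n : ℕ)
    (V : EuclideanSpace ℝ (Fin n) → ℝ) (hV : Continuous V) (hper : ZPerN n V)
    (hmax : ∀ x, V x ≤ 0) (hatt : ∃ x, V x = 0)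
    (hfin : {x : EuclideanSpace ℝ (Fin n) |
      (∀ i, x i ∈ Set.Ico (0:ℝ) 1) ∧ V x = 0}.Finite) :
    (∀ p : EuclideanSpace ℝ (Fin n), 0 ≤ effHN n V p) ∧
    ∃ r : ℝ, 0 < r ∧ ∀ p : EuclideanSpace ℝ (Fin n), ‖p‖ ≤ r → effHN n V p = 0 := by
  obtain ⟨x₀, hx₀⟩ := hatt
  refine ⟨effHN_nonneg hx₀.ge, ?_⟩
  obtain ⟨ρ, hρ, W, hW, hWper, ⟨M, hM⟩, hWid⟩ := exists_periodic_fderiv_eq_id hfin.toFinset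
    fun s hs s' hs' => eq_of_latticeRem_sub_eq_zero (hfin.mem_toFinset.1 hs).1
      (hfin.mem_toFinset.1 hs').1
  obtain ⟨δ, hδ, hVδ⟩ := exists_pos_le_neg_away_from_zeros hV hper hmax (fun x hx => by
    obtain ⟨s, hs, hxs⟩ := exists_latticeRem_sub_eq_zero hper hx
    exact ⟨s, hfin.mem_toFinset.2 hs, hxs⟩) hρ
  have hM0 : 0 ≤ M := (norm_nonneg _).trans (hM 0)
  refine ⟨√(2 * δ) / (1 + M), by positivity, fun p hp => ?_⟩
  refine effHN_eq_zero_of_periodic_field hx₀ hmax hW hWper hM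
    (fun x hx => hVδ x fun s hs => not_lt.1 fun h => hx (hWid x s hs h)) ?_
  exact (Real.le_sqrt (by positivity) (by positivity)).1 ((le_div_iff₀ (by positivity)).1 hp)

/-- If `V` is continuous, `ℤⁿ`-periodic, with `max V = 0` attained at
finitely many points per period, then `H̄ ≥ 0` everywhere and `H̄ = 0` on a ball around the
origin: `0` is an interior point of `F₀`. -/
theorem statement_15 (n : ℕ) (hn : 1 ≤ n)
    (V : EuclideanSpace ℝ (Fin n) → ℝ) (hV : Continuous V) (hper : ZPerN n V)
    (hmax : ∀ x, V x ≤ 0) (hatt : ∃ x, V x = 0)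
    (hfin : {x : EuclideanSpace ℝ (Fin n) |
      (∀ i, x i ∈ Set.Ico (0:ℝ) 1) ∧ V x = 0}.Finite) :
    (∀ p : EuclideanSpace ℝ (Fin n), 0 ≤ effHN n V p) ∧
    ∃ r : ℝ, 0 < r ∧ ∀ p : EuclideanSpace ℝ (Fin n), ‖p‖ ≤ r → effHN n V p = 0 :=
  statement_15_general n V hV hper hmax hatt hfin
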